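/- Let D = conv{0, e₁, e₂, e₃, e₁+e₃, e₂+e₃} ⊆ ℝ³ be the triangular prism over the triangle conv{0, e₁, e₂}, and let Λ' be a full-rank lattice in ℝ³ containing ℤ³ such that for any two distinct vectors s, t ∈ Λ' the interiors of D + s and D + t are disjoint. Then Λ' = ℤ³. -/

import Mathlib

open Pointwise MeasureTheory

/-!
The difference body `D° - D°` of the open prism is the open hexagonal prism
`|x₁|, |x₂|, |x₁ + x₂|, |x₃| < 1`, and its `ℤ³`-translates cover `ℝ³`: the fractional part `f`
of a vector lies in it when `f₁ + f₂ < 1`, and `f - e₂` does otherwise. Hence a vector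
`v ∈ Λ' \ ℤ³` would have some `t ∈ ℤ³ ⊆ Λ'` with `v - t ∈ D° - D°`, so that the translates
`t + D` and `v + D` would overlap in their interiors.
-/

/-- The standard basis vector `eᵢ` of `ℝ³`. -/
noncomputable def stdVec (i : Fin 3) : EuclideanSpace ℝ (Fin 3) :=
  EuclideanSpace.single i (1 : ℝ)

/-- The triangular prism `conv {0, e₁, e₂, e₃, e₁+e₃, e₂+e₃} ⊆ ℝ³` over the
triangle `conv {0, e₁, e₂}`. -/
noncomputable def stdPrism : Set (EuclideanSpace ℝ (Fin 3)) :=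
  convexHull ℝ {0, stdVec 0, stdVec 1, stdVec 2, stdVec 0 + stdVec 2, stdVec 1 + stdVec 2}

/-- The standard integer lattice `ℤ³ ⊆ ℝ³`, i.e. the `ℤ`-span of the standard basis. -/
noncomputable def intLattice : Submodule ℤ (EuclideanSpace ℝ (Fin 3)) :=
  Submodule.span ℤ (Set.range stdVec)

lemma mem_intLattice_iff {x : EuclideanSpace ℝ (Fin 3)} :
    x ∈ intLattice ↔ ∀ i, ∃ n : ℤ, (n : ℝ) = x i := by
  have : stdVec = (EuclideanSpace.basisFun (Fin 3) ℝ).toBasis := by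
    ext1 i; simp [stdVec]
  rw [intLattice, this, Module.Basis.mem_span_iff_repr_mem]
  rfl

def openPrism : Set (EuclideanSpace ℝ (Fin 3)) :=
  {x | 0 < x 0 ∧ 0 < x 1 ∧ x 0 + x 1 < 1 ∧ 0 < x 2 ∧ x 2 < 1}

lemma isOpen_openPrism : IsOpen openPrism := by
  have hc (i : Fin 3) : Continuous fun x : EuclideanSpace ℝ (Fin 3) => x i := by fun_prop
  exact (isOpen_lt continuous_const (hc 0)).inter <| (isOpen_lt continuous_const (hc 1)).inter <|
    (isOpen_lt ((hc 0).add (hc 1)) continuous_const).inter <|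
    (isOpen_lt continuous_const (hc 2)).inter (isOpen_lt (hc 2) continuous_const)

lemma openPrism_subset_stdPrism : openPrism ⊆ stdPrism := by
  rintro x ⟨h0, h1, h01, h2, h2'⟩
  set a := x 0; set b := x 1; set c := x 2
  let w : Fin 6 → ℝ := ![(1-c)*(1-a-b), (1-c)*a, (1-c)*b, c*(1-a-b), c*a, c*b]
  let z : Fin 6 → EuclideanSpace ℝ (Fin 3) :=
    ![0, stdVec 0, stdVec 1, stdVec 2, stdVec 0 + stdVec 2, stdVec 1 + stdVec 2]
  have hx : ∑ i, w i • z i = x := by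
    ext j; fin_cases j <;> simp [w, z, Fin.sum_univ_six, stdVec, a, b, c] <;> ring
  rw [← hx]
  refine (convex_convexHull ℝ _).sum_mem (fun i _ => ?_) ?_ (fun i _ => subset_convexHull ℝ _ ?_)
  · have : 0 ≤ 1 - c := by linarith
    have : 0 ≤ 1 - a - b := by linarith
    fin_cases i <;> simp [w] <;> positivity
  · simp [w, Fin.sum_univ_six]; ring
  · fin_cases i <;> simp [z]

lemma add_mem_interior_vadd_stdPrism (a : EuclideanSpace ℝ (Fin 3))
    {p : EuclideanSpace ℝ (Fin 3)} (hp : p ∈ openPrism) : a + p ∈ interior (a +ᵥ stdPrism) :=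
  interior_maximal (Set.vadd_set_mono openPrism_subset_stdPrism) (isOpen_openPrism.vadd a)
    (Set.vadd_mem_vadd_set hp)

lemma exists_mem_triangle_and_add_mem_triangle {a b : ℝ} (ha : |a| < 1) (hb : |b| < 1)
    (hab : |a + b| < 1) :
    ∃ u v : ℝ, 0 < u ∧ 0 < v ∧ u + v < 1 ∧ 0 < a + u ∧ 0 < b + v ∧ a + u + (b + v) < 1 := by
  rw [abs_lt] at ha hb hab
  have hM : max 0 (-a) + max 0 (-b) + max 0 (a + b) < 1 := by
    simp only [max_def]; split_ifs <;> linarith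
  obtain ⟨ε, hε, hεM⟩ : ∃ ε > 0, max 0 (-a) + max 0 (-b) + max 0 (a + b) + 2 * ε < 1 :=
    ⟨(1 - (max 0 (-a) + max 0 (-b) + max 0 (a + b))) / 3, by linarith, by linarith⟩
  have := le_max_left 0 (-a); have := le_max_right 0 (-a)
  have := le_max_left 0 (-b); have := le_max_right 0 (-b)
  have := le_max_left 0 (a + b); have := le_max_right 0 (a + b)
  exact ⟨max 0 (-a) + ε, max 0 (-b) + ε, by linarith, by linarith, by linarith, by linarith,
    by linarith, by linarith⟩

lemma mem_openPrism_sub_openPrism {x : EuclideanSpace ℝ (Fin 3)} (h0 : |x 0| < 1)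
    (h1 : |x 1| < 1) (h01 : |x 0 + x 1| < 1) (h2 : |x 2| < 1) :
    x ∈ openPrism - openPrism := by
  obtain ⟨u, v, hu, hv, huv, hxu, hxv, hxuv⟩ :=
    exists_mem_triangle_and_add_mem_triangle h0 h1 h01
  rw [abs_lt] at h2
  let q : EuclideanSpace ℝ (Fin 3) := !₂[u, v, (1 - x 2) / 2]
  refine ⟨x + q, ?_, q, ?_, add_sub_cancel_right x q⟩ <;>
    refine ⟨?_, ?_, ?_, ?_, ?_⟩ <;> simp [q] <;> linarith

lemma exists_mem_intLattice_sub_mem_openPrism_sub (x : EuclideanSpace ℝ (Fin 3)) :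
    ∃ t ∈ intLattice, x - t ∈ openPrism - openPrism := by
  let t₀ : EuclideanSpace ℝ (Fin 3) := WithLp.toLp 2 fun i => (⌊x i⌋ : ℝ)
  have ht₀ : t₀ ∈ intLattice := mem_intLattice_iff.2 fun i => ⟨⌊x i⌋, rfl⟩
  have hfract (i : Fin 3) : (x - t₀) i = Int.fract (x i) := rfl
  have hf (i : Fin 3) := Int.fract_nonneg (x i)
  have hf' (i : Fin 3) := Int.fract_lt_one (x i)
  by_cases hsum : Int.fract (x 0) + Int.fract (x 1) < 1
  · refine ⟨t₀, ht₀, mem_openPrism_sub_openPrism ?_ ?_ ?_ ?_⟩ <;>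
      simp only [hfract, abs_lt] <;> constructor <;>
      linarith [hf 0, hf 1, hf 2, hf' 0, hf' 1, hf' 2]
  · have hcoord (i : Fin 3) :
        (x - (t₀ + stdVec 1)) i = Int.fract (x i) - if i = 1 then 1 else 0 := by
      rw [sub_add_eq_sub_sub, PiLp.sub_apply, hfract]; simp [stdVec]
    refine ⟨t₀ + stdVec 1, add_mem ht₀ (Submodule.subset_span ⟨1, rfl⟩),
      mem_openPrism_sub_openPrism ?_ ?_ ?_ ?_⟩ <;>
      simp only [hcoord, Fin.reduceEq, zero_ne_one, ↓reduceIte, sub_zero, abs_lt] <;>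
      constructor <;> linarith [hf 0, hf 1, hf 2, hf' 0, hf' 1, hf' 2]

theorem stmt_12_general (Λ' : Submodule ℤ (EuclideanSpace ℝ (Fin 3)))
    (hle : intLattice ≤ Λ')
    (h : ∀ s ∈ Λ', ∀ t ∈ Λ', s ≠ t →
      Disjoint (interior (s +ᵥ stdPrism)) (interior (t +ᵥ stdPrism))) :
    Λ' = intLattice := by
  refine le_antisymm (fun v hv => ?_) hle
  by_contra hvZ
  obtain ⟨t, ht, p, hp, q, hq, hpq⟩ := exists_mem_intLattice_sub_mem_openPrism_sub v
  have hne : t ≠ v := fun htv => hvZ (htv ▸ ht)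
  have hmeet : p + t = v + q := sub_eq_sub_iff_add_eq_add.1 hpq
  have hmem := add_mem_interior_vadd_stdPrism t hp
  rw [add_comm, hmeet] at hmem
  exact Set.disjoint_left.1 (h t (hle ht) v hv hne) hmem (add_mem_interior_vadd_stdPrism v hq)

/-- If `Λ'` is a full-rank lattice in `ℝ³` containing `ℤ³` such that the translates of the
triangular prism `D` by the vectors of `Λ'` have pairwise disjoint interiors,
then `Λ' = ℤ³`. -/
theorem stmt_12 (Λ' : Submodule ℤ (EuclideanSpace ℝ (Fin 3)))
    [DiscreteTopology Λ'] [IsZLattice ℝ Λ']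
    (hle : intLattice ≤ Λ')
    (h : ∀ s ∈ Λ', ∀ t ∈ Λ', s ≠ t →
      Disjoint (interior (s +ᵥ stdPrism)) (interior (t +ᵥ stdPrism))) :
    Λ' = intLattice :=
  stmt_12_general Λ' hle h
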